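/- Let Γ be the group with presentation ⟨x_1, …, x_t, d_1, …, d_h ∣ x_1⋯x_t·d_1²⋯d_h² = 1, x_1^p = ⋯ = x_t^p = 1⟩ with t ≥ 0 and h ≥ 1. Then there exists a group automorphism ψ : Γ → Γ such that: (i) for every group homomorphism θ from Γ to the additive group ℤ/p one has θ(ψ(u)) = -θ(u) for all u ∈ Γ; and (ii) for each i = 1, …, t, the element ψ(x_i) is conjugate in Γ to x_i⁻¹. -/

import Mathlib

namespace Stmt7

variable (p t h : ℕ)

/-- The long relation `x_1 ⋯ x_t · d_1² ⋯ d_h²` in the free group on `t + h` generators,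
where `x_i` corresponds to `Sum.inl i` and `d_j` to `Sum.inr j`. -/
def longRel : FreeGroup (Fin t ⊕ Fin h) :=
  (((List.finRange t).map fun i => FreeGroup.of (Sum.inl i)).prod) *
  (((List.finRange h).map fun j => (FreeGroup.of (Sum.inr j)) ^ 2).prod)

/-- The relations `x_1 ⋯ x_t · d_1² ⋯ d_h² = 1` and `x_i^p = 1`. -/
def rels : Set (FreeGroup (Fin t ⊕ Fin h)) :=
  insert (longRel t h) (Set.range fun i : Fin t => (FreeGroup.of (Sum.inl i : Fin t ⊕ Fin h)) ^ p)

/-- The NEC group `Γ = ⟨x_1, …, x_t, d_1, …, d_h ∣ x_1⋯x_t·d_1²⋯d_h² = x_1^p = ⋯ = x_t^p = 1⟩`. -/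
abbrev Γ := PresentedGroup (rels p t h)

/-- The elliptic generator `x_i`. -/
def x (i : Fin t) : Γ p t h := PresentedGroup.of (Sum.inl i)

/-- The glide-reflection generator `d_j`. -/
def d (j : Fin h) : Γ p t h := PresentedGroup.of (Sum.inr j)

/-!
`ψ` sends `x_i ↦ P_i x_i⁻¹ P_i⁻¹` and `d_j ↦ Q_j d_j⁻¹ Q_j⁻¹`, where `P_i = x_1 ⋯ x_{i-1}` and
`Q_j = d_1² ⋯ d_{j-1}²`. The prefix products telescope: `ψ` inverts every `P_i` and every `Q_j`,
so it sends the relator `X D`, where `X = x_1 ⋯ x_t` and `D = d_1² ⋯ d_h²`, to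
`X⁻¹ D⁻¹ = (D X)⁻¹`, which is trivial because `X D = 1`. The same telescoping shows
`ψ ∘ ψ = id`. Since every generator goes to a conjugate of its inverse, `θ ∘ ψ = θ⁻¹` for
every homomorphism `θ` to an abelian group.
-/

section TwistedInv

variable {G H : Type*} [Group G] [Group H] {n : ℕ}

theorem map_partialProd (φ : G →* H) (f : Fin n → G) (i : Fin (n + 1)) :
    φ (Fin.partialProd f i) = Fin.partialProd (φ ∘ f) i := by
  rw [Fin.partialProd, Fin.partialProd, map_list_prod, List.map_take, List.map_ofFn]

theorem partialProd_last (f : Fin n → G) :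
    Fin.partialProd f (Fin.last n) = (List.ofFn f).prod := by
  rw [Fin.partialProd, Fin.val_last, List.take_of_length_le (by simp)]

def twistedInv (f : Fin n → G) (i : Fin n) : G :=
  MulAut.conj (Fin.partialProd f i.castSucc) (f i)⁻¹

theorem partialProd_twistedInv (f : Fin n → G) (i : Fin (n + 1)) :
    Fin.partialProd (twistedInv f) i = (Fin.partialProd f i)⁻¹ := by
  induction i using Fin.induction with
  | zero => simp
  | succ j ih =>
    rw [Fin.partialProd_succ, Fin.partialProd_succ, ih, twistedInv, MulAut.conj_apply]
    group

theorem prod_ofFn_twistedInv (f : Fin n → G) :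
    (List.ofFn (twistedInv f)).prod = (List.ofFn f).prod⁻¹ := by
  rw [← partialProd_last, ← partialProd_last, partialProd_twistedInv]

end TwistedInv

theorem map_longRel {G : Type*} [Group G] (φ : FreeGroup (Fin t ⊕ Fin h) →* G) :
    φ (longRel t h) = (List.ofFn fun i => φ (.of (.inl i))).prod *
      (List.ofFn fun j => φ (.of (.inr j)) ^ 2).prod := by
  simp [longRel, map_list_prod, List.ofFn_eq_map, Function.comp_def]

theorem prod_x_mul_prod_d_sq_eq_one :
    (List.ofFn (x p t h)).prod * (List.ofFn fun j => d p t h j ^ 2).prod = 1 := by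
  have : longRel t h ∈ rels p t h := Set.mem_insert _ _
  rw [← PresentedGroup.one_of_mem this, map_longRel]
  rfl

theorem x_pow_eq_one (i : Fin t) : x p t h i ^ p = 1 := by
  have : FreeGroup.of (.inl i) ^ p ∈ rels p t h := Set.mem_insert_of_mem _ ⟨i, rfl⟩
  rw [← PresentedGroup.one_of_mem this, map_pow]
  rfl

def psiGen : Fin t ⊕ Fin h → Γ p t h
  | .inl i => twistedInv (x p t h) i
  | .inr j => MulAut.conj (Fin.partialProd (fun j => d p t h j ^ 2) j.castSucc) (d p t h j)⁻¹

theorem psiGen_inr_sq (j : Fin h) :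
    psiGen p t h (.inr j) ^ 2 = twistedInv (fun j => d p t h j ^ 2) j := by
  rw [psiGen, ← map_pow, inv_pow, twistedInv]

theorem lift_psiGen_eq_one : ∀ r ∈ rels p t h, FreeGroup.lift (psiGen p t h) r = 1 := by
  rintro r (rfl | ⟨i, rfl⟩)
  · simp only [map_longRel, FreeGroup.lift_apply_of, psiGen_inr_sq]
    rw [show (fun i => psiGen p t h (.inl i)) = twistedInv (x p t h) from rfl,
      prod_ofFn_twistedInv, prod_ofFn_twistedInv, ← mul_inv_rev, inv_eq_one,
      ← mul_eq_one_comm, prod_x_mul_prod_d_sq_eq_one]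
  · rw [map_pow, FreeGroup.lift_apply_of, psiGen, twistedInv, ← map_pow, inv_pow, x_pow_eq_one,
      inv_one, map_one]

def psi : Γ p t h →* Γ p t h := PresentedGroup.toGroup (lift_psiGen_eq_one p t h)

theorem psi_x (i : Fin t) : psi p t h (x p t h i) = twistedInv (x p t h) i :=
  PresentedGroup.toGroup.of _

theorem psi_d (j : Fin h) :
    psi p t h (d p t h j) =
      MulAut.conj (Fin.partialProd (fun j => d p t h j ^ 2) j.castSucc) (d p t h j)⁻¹ :=
  PresentedGroup.toGroup.of _

theorem psi_partialProd_x (i : Fin (t + 1)) :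
    psi p t h (Fin.partialProd (x p t h) i) = (Fin.partialProd (x p t h) i)⁻¹ := by
  rw [map_partialProd, ← partialProd_twistedInv]
  congr 1
  exact funext (psi_x p t h)

theorem psi_partialProd_d_sq (j : Fin (h + 1)) :
    psi p t h (Fin.partialProd (fun j => d p t h j ^ 2) j) =
      (Fin.partialProd (fun j => d p t h j ^ 2) j)⁻¹ := by
  rw [map_partialProd, ← partialProd_twistedInv]
  congr 1
  funext j
  rw [Function.comp_apply, map_pow, psi_d, ← map_pow, inv_pow, twistedInv]

theorem psi_comp_psi : (psi p t h).comp (psi p t h) = MonoidHom.id _ := by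
  refine PresentedGroup.ext fun s => ?_
  rcases s with i | j
  · change psi p t h (psi p t h (x p t h i)) = x p t h i
    simp only [psi_x, twistedInv, MulAut.conj_apply, map_mul, map_inv, psi_partialProd_x]
    group
  · change psi p t h (psi p t h (d p t h j)) = d p t h j
    simp only [psi_d, MulAut.conj_apply, map_mul, map_inv, psi_partialProd_d_sq]
    group

theorem comp_psi_eq_inv {A : Type*} [CommGroup A] (θ : Γ p t h →* A) :
    θ.comp (psi p t h) = θ⁻¹ := by
  refine PresentedGroup.ext fun s => ?_
  rcases s with i | j
  · change θ (psi p t h (x p t h i)) = (θ (x p t h i))⁻¹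
    simp [psi_x, twistedInv]
  · change θ (psi p t h (d p t h j)) = (θ (d p t h j))⁻¹
    simp [psi_d]

theorem stmt7 :
    ∃ ψ : Γ p t h ≃* Γ p t h,
      (∀ θ : Γ p t h →* Multiplicative (ZMod p), ∀ u : Γ p t h,
        Multiplicative.toAdd (θ (ψ u)) = - Multiplicative.toAdd (θ u)) ∧
      ∀ i : Fin t, ∃ g : Γ p t h, ψ (x p t h i) = g * (x p t h i)⁻¹ * g⁻¹ :=
  ⟨(psi p t h).toMulEquiv (psi p t h) (psi_comp_psi p t h) (psi_comp_psi p t h),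
    fun θ u => congrArg Multiplicative.toAdd (DFunLike.congr_fun (comp_psi_eq_inv p t h θ) u),
    fun i => ⟨Fin.partialProd (x p t h) i.castSucc, psi_x p t h i⟩⟩

end Stmt7
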